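/- The canonical Lie–Poisson bivector P on e*(3) and its trivial deformation P_g (the Chaplygin bracket with g = sqrt(1 − d(γ,Aγ))) are compatible: the Schouten bracket [P, P_g] vanishes, i.e. P + P_g again satisfies the Jacobi identity. -/

import Mathlib

open scoped BigOperators
noncomputable section

/-- ℝ³ as functions `Fin 3 → ℝ`. -/
abbrev R3 := Fin 3 → ℝ

/-- Phase space: pairs `(γ, M)`. -/
abbrev St := R3 × R3

/-- Standard scalar product in ℝ³. -/
def dot3 (x y : R3) : ℝ := ∑ i, x i * y i

/-- Cross product in ℝ³. -/
def cross (x y : R3) : R3 :=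
  ![x 1 * y 2 - x 2 * y 1, x 2 * y 0 - x 0 * y 2, x 0 * y 1 - x 1 * y 0]

/-- Levi-Civita symbol. -/
def eps (i j k : Fin 3) : ℝ :=
  ((((j : ℤ) - (i : ℤ)) * ((k : ℤ) - (i : ℤ)) * ((k : ℤ) - (j : ℤ))) / 2 : ℤ)

/-- Application of the diagonal matrix A = diag a. -/
def Aapp (a : R3) (v : R3) : R3 := fun i => a i * v i

/-- Angular velocity ω expressed through M. -/
def omg (a : R3) (d : ℝ) (x : St) : R3 := fun i =>
  a i * x.2 i + d * dot3 x.1 (Aapp a x.2) / (1 - d * dot3 x.1 (Aapp a x.1)) * (a i * x.1 i)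

/-- g(γ) = sqrt(1 - d (γ, Aγ)). -/
def gfun (a : R3) (d : ℝ) (γ : R3) : ℝ := Real.sqrt (1 - d * dot3 γ (Aapp a γ))

/-- Partial derivative in the γ (inl) or M (inr) direction. -/
def pd : (Fin 3 ⊕ Fin 3) → (St → ℝ) → St → ℝ
  | .inl i, F, x => fderiv ℝ F x (Pi.single i 1, 0)
  | .inr i, F, x => fderiv ℝ F x (0, Pi.single i 1)

/-- Bracket of two functions determined by a structure matrix π. -/
def pb (π : St → (Fin 3 ⊕ Fin 3) → (Fin 3 ⊕ Fin 3) → ℝ) (F G : St → ℝ) (x : St) : ℝ :=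
  ∑ u, ∑ v, π x u v * pd u F x * pd v G x

/-- Structure matrix of the bracket {·,·}_g. -/
def piG (a : R3) (d : ℝ) (x : St) : (Fin 3 ⊕ Fin 3) → (Fin 3 ⊕ Fin 3) → ℝ
  | .inl _, .inl _ => 0
  | .inl i, .inr j => ∑ k, eps i j k * gfun a d x.1 * x.1 k
  | .inr i, .inl j => ∑ k, eps i j k * gfun a d x.1 * x.1 k
  | .inr i, .inr j => ∑ k, eps i j k *
      (gfun a d x.1 * x.2 k - d * dot3 x.2 (Aapp a x.1) * x.1 k / gfun a d x.1)

/-- Coordinate functions on the phase space. -/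
def coordFn : (Fin 3 ⊕ Fin 3) → St → ℝ
  | .inl i => fun x => x.1 i
  | .inr i => fun x => x.2 i

/-- Structure matrix of the canonical Lie-Poisson bracket on e*(3). -/
def piP (x : St) : (Fin 3 ⊕ Fin 3) → (Fin 3 ⊕ Fin 3) → ℝ
  | .inl _, .inl _ => 0
  | .inl i, .inr j => ∑ k, eps i j k * x.1 k
  | .inr i, .inl j => ∑ k, eps i j k * x.1 k
  | .inr i, .inr j => ∑ k, eps i j k * x.2 k

/-!
Write `P_g = g P - (d (M, Aγ) / g) R`, where `R` (`piGammaMM`) is the `M`–`M` block of `P` with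
`γ` in place of `M`. On coordinate functions the mixed Jacobi identity involves only the
structure matrices and their first derivatives; `P` and `R` are linear and `∂g = -d (γ, A ·) / g`.
So each instance is a polynomial identity in `x`, `g` and `g⁻¹` in which only the powers `g`, `g⁻¹`
and `g⁻³` occur: no `g * g⁻¹` has to cancel, and `ring` checks it with `g⁻¹` as a formal variable.
-/

theorem IsLinearMap.hasFDerivAt {E F : Type*} [NormedAddCommGroup E] [NormedSpace ℝ E]
    [FiniteDimensional ℝ E] [NormedAddCommGroup F] [NormedSpace ℝ F] {f : E → F}
    (hf : IsLinearMap ℝ f) (x : E) :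
    HasFDerivAt f (LinearMap.toContinuousLinearMap hf.mk') x :=
  (LinearMap.toContinuousLinearMap hf.mk').hasFDerivAt

def unitVec : Fin 3 ⊕ Fin 3 → St
  | .inl i => (Pi.single i 1, 0)
  | .inr i => (0, Pi.single i 1)

theorem pd_eq_fderiv (s : Fin 3 ⊕ Fin 3) (F : St → ℝ) (x : St) :
    pd s F x = fderiv ℝ F x (unitVec s) := by
  cases s <;> rfl

section PartialDerivative

variable {F G : St → ℝ} {x : St} (s : Fin 3 ⊕ Fin 3)

theorem pd_const (c : ℝ) : pd s (fun _ => c) x = 0 := by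
  simp only [pd_eq_fderiv, fderiv_const_apply, zero_apply]

theorem pd_sub (hF : DifferentiableAt ℝ F x) (hG : DifferentiableAt ℝ G x) :
    pd s (fun y => F y - G y) x = pd s F x - pd s G x := by
  simp only [pd_eq_fderiv, fderiv_fun_sub hF hG, sub_apply]

theorem pd_mul (hF : DifferentiableAt ℝ F x) (hG : DifferentiableAt ℝ G x) :
    pd s (fun y => F y * G y) x = pd s F x * G x + F x * pd s G x := by
  simp only [pd_eq_fderiv, fderiv_fun_mul hF hG, add_apply, smul_apply, smul_eq_mul]
  ring

theorem pd_sum {ι : Type*} (t : Finset ι) {F : ι → St → ℝ}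
    (hF : ∀ i ∈ t, DifferentiableAt ℝ (F i) x) :
    pd s (fun y => ∑ i ∈ t, F i y) x = ∑ i ∈ t, pd s (F i) x := by
  simp only [pd_eq_fderiv, fderiv_fun_sum hF, sum_apply]

theorem pd_comp {φ : ℝ → ℝ} {φ' : ℝ} (hφ : HasDerivAt φ φ' (F x))
    (hF : DifferentiableAt ℝ F x) : pd s (fun y => φ (F y)) x = φ' * pd s F x := by
  rw [pd_eq_fderiv, pd_eq_fderiv, show (fun y => φ (F y)) = φ ∘ F from rfl,
    (hφ.comp_hasFDerivAt x hF.hasFDerivAt).fderiv, smul_apply, smul_eq_mul]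

theorem pd_of_isLinearMap (hF : IsLinearMap ℝ F) : pd s F x = F (unitVec s) := by
  rw [pd_eq_fderiv, (hF.hasFDerivAt x).fderiv]
  rfl

theorem pd_fst_apply (k : Fin 3) : pd s (fun y : St => y.1 k) x = (unitVec s).1 k :=
  pd_of_isLinearMap s ⟨fun _ _ => rfl, fun _ _ => rfl⟩

theorem pd_snd_apply (k : Fin 3) : pd s (fun y : St => y.2 k) x = (unitVec s).2 k :=
  pd_of_isLinearMap s ⟨fun _ _ => rfl, fun _ _ => rfl⟩

theorem pd_coordFn (t : Fin 3 ⊕ Fin 3) : pd s (coordFn t) x = if s = t then 1 else 0 := by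
  rcases s with m | m <;> rcases t with k | k <;>
    simp [coordFn, pd_fst_apply, pd_snd_apply, unitVec, Pi.single_apply, eq_comm]

end PartialDerivative

theorem pb_coordFn_left (π : St → (Fin 3 ⊕ Fin 3) → (Fin 3 ⊕ Fin 3) → ℝ) (u : Fin 3 ⊕ Fin 3)
    (H : St → ℝ) (x : St) : pb π (coordFn u) H x = ∑ s, π x u s * pd s H x := by
  simp [pb, pd_coordFn]

theorem pb_coordFn_coordFn (π : St → (Fin 3 ⊕ Fin 3) → (Fin 3 ⊕ Fin 3) → ℝ)
    (v w : Fin 3 ⊕ Fin 3) : pb π (coordFn v) (coordFn w) = fun y => π y v w := by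
  funext y
  simp [pb_coordFn_left, pd_coordFn]

theorem eps_eq (i j k : Fin 3) :
    eps i j k = ![![![0, 0, 0], ![0, 0, 1], ![0, -1, 0]],
      ![![0, 0, -1], ![0, 0, 0], ![1, 0, 0]],
      ![![0, 1, 0], ![-1, 0, 0], ![0, 0, 0]]] i j k := by
  fin_cases i <;> fin_cases j <;> fin_cases k <;> norm_num [eps]

def piGammaMM (x : St) : (Fin 3 ⊕ Fin 3) → (Fin 3 ⊕ Fin 3) → ℝ
  | .inl _, .inl _ => 0
  | .inl _, .inr _ => 0
  | .inr _, .inl _ => 0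
  | .inr i, .inr j => ∑ k, eps i j k * x.1 k

theorem isLinearMap_piP (v w : Fin 3 ⊕ Fin 3) : IsLinearMap ℝ (fun y => piP y v w) := by
  constructor <;> intros <;> rcases v with i | i <;> rcases w with j | j <;>
    simp [piP, Finset.mul_sum, ← Finset.sum_add_distrib, mul_add, mul_left_comm]

theorem isLinearMap_piGammaMM (v w : Fin 3 ⊕ Fin 3) :
    IsLinearMap ℝ (fun y => piGammaMM y v w) := by
  constructor <;> intros <;> rcases v with i | i <;> rcases w with j | j <;>
    simp [piGammaMM, Finset.mul_sum, ← Finset.sum_add_distrib, mul_add, mul_left_comm]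

theorem piG_eq (a : R3) (d : ℝ) (y : St) (v w : Fin 3 ⊕ Fin 3) :
    piG a d y v w = gfun a d y.1 * piP y v w
      - d * dot3 y.2 (Aapp a y.1) * (gfun a d y.1)⁻¹ * piGammaMM y v w := by
  rcases v with i | i <;> rcases w with j | j <;>
    simp only [piG, piP, piGammaMM, Finset.mul_sum, ← Finset.sum_sub_distrib, mul_zero,
      div_eq_mul_inv, sub_zero] <;>
    exact Finset.sum_congr rfl fun k _ => by ring

section Chaplygin

variable (a : R3) (d : ℝ) {x : St} (s : Fin 3 ⊕ Fin 3)

theorem pd_dot3_fst_Aapp_fst :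
    pd s (fun y : St => dot3 y.1 (Aapp a y.1)) x = 2 * dot3 x.1 (Aapp a (unitVec s).1) := by
  simp only [dot3, Aapp]
  rw [pd_sum s _ fun i _ => by fun_prop]
  simp (disch := fun_prop) only [pd_mul, pd_const, pd_fst_apply]
  rw [Finset.mul_sum]
  exact Finset.sum_congr rfl fun i _ => by ring

theorem pd_dot3_snd_Aapp_fst :
    pd s (fun y : St => dot3 y.2 (Aapp a y.1)) x =
      dot3 (unitVec s).2 (Aapp a x.1) + dot3 x.2 (Aapp a (unitVec s).1) := by
  simp only [dot3, Aapp]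
  rw [pd_sum s _ fun i _ => by fun_prop, ← Finset.sum_add_distrib]
  simp (disch := fun_prop) only [pd_mul, pd_const, pd_fst_apply, pd_snd_apply]
  exact Finset.sum_congr rfl fun i _ => by ring

theorem differentiableAt_gfun (hx : 1 - d * dot3 x.1 (Aapp a x.1) ≠ 0) :
    DifferentiableAt ℝ (fun y : St => gfun a d y.1) x := by
  unfold gfun dot3 Aapp
  exact DifferentiableAt.sqrt (by fun_prop) hx

theorem pd_gfun (hx : 1 - d * dot3 x.1 (Aapp a x.1) ≠ 0) :
    pd s (fun y : St => gfun a d y.1) x =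
      -(d * dot3 x.1 (Aapp a (unitVec s).1)) / gfun a d x.1 := by
  have hq : DifferentiableAt ℝ (fun y : St => dot3 y.1 (Aapp a y.1)) x := by
    unfold dot3 Aapp
    fun_prop
  unfold gfun
  rw [pd_comp s (Real.hasDerivAt_sqrt hx) (by fun_prop), pd_sub s (by fun_prop) (by fun_prop),
    pd_mul s (by fun_prop) hq, pd_const, pd_const, pd_dot3_fst_Aapp_fst]
  field_simp
  ring

theorem pd_piG (hx : 0 < 1 - d * dot3 x.1 (Aapp a x.1)) (v w : Fin 3 ⊕ Fin 3) :
    pd s (fun y => piG a d y v w) x =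
      pd s (fun y : St => gfun a d y.1) x * piP x v w + gfun a d x.1 * piP (unitVec s) v w
      - d * (pd s (fun y : St => dot3 y.2 (Aapp a y.1)) x / gfun a d x.1
          - dot3 x.2 (Aapp a x.1) * pd s (fun y : St => gfun a d y.1) x / gfun a d x.1 ^ 2)
        * piGammaMM x v w
      - d * dot3 x.2 (Aapp a x.1) / gfun a d x.1 * piGammaMM (unitVec s) v w := by
  have hg := differentiableAt_gfun a d hx.ne'
  have hg0 : gfun a d x.1 ≠ 0 := (Real.sqrt_pos.mpr hx).ne'
  have hS : DifferentiableAt ℝ (fun y : St => dot3 y.2 (Aapp a y.1)) x := by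
    unfold dot3 Aapp
    fun_prop
  have hP := ((isLinearMap_piP v w).hasFDerivAt x).differentiableAt
  have hR := ((isLinearMap_piGammaMM v w).hasFDerivAt x).differentiableAt
  simp only [piG_eq]
  rw [pd_sub s (by fun_prop) (by fun_prop (disch := exact hg0)), pd_mul s hg hP,
    pd_mul s (by fun_prop (disch := exact hg0)) hR, pd_mul s (by fun_prop) (hg.fun_inv hg0),
    pd_mul s (differentiableAt_const d) hS, pd_const, pd_comp s (hasDerivAt_inv hg0) hg,
    pd_of_isLinearMap s (isLinearMap_piP v w), pd_of_isLinearMap s (isLinearMap_piGammaMM v w)]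
  ring

end Chaplygin

set_option maxHeartbeats 1000000 in
theorem compatibility_P_Pg_general
    (a : R3) (d : ℝ)
    (x : St) (hx : 0 < 1 - d * dot3 x.1 (Aapp a x.1)) :
    ∀ u v w : Fin 3 ⊕ Fin 3,
      (pb piP (coordFn u) (pb (piG a d) (coordFn v) (coordFn w)) x +
       pb piP (coordFn v) (pb (piG a d) (coordFn w) (coordFn u)) x +
       pb piP (coordFn w) (pb (piG a d) (coordFn u) (coordFn v)) x) +
      (pb (piG a d) (coordFn u) (pb piP (coordFn v) (coordFn w)) x +
       pb (piG a d) (coordFn v) (pb piP (coordFn w) (coordFn u)) x +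
       pb (piG a d) (coordFn w) (pb piP (coordFn u) (coordFn v)) x) = 0 := by
  intro u v w
  simp only [pb_coordFn_coordFn, pb_coordFn_left, pd_piG a d _ hx,
    pd_of_isLinearMap _ (isLinearMap_piP _ _)]
  simp only [piG_eq, pd_gfun a d _ hx.ne', pd_dot3_snd_Aapp_fst]
  rcases u with i | i <;> rcases v with j | j <;> rcases w with k | k <;>
    simp only [Fintype.sum_sum_type, Fin.sum_univ_three, piP, piGammaMM, unitVec, dot3, Aapp] <;>
    fin_cases i <;> fin_cases j <;> fin_cases k <;>
    simp only [Fin.zero_eta, Fin.mk_one, Fin.reduceFinMk, eps_eq, Pi.single_apply, Fin.isValue,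
      Fin.reduceEq, ↓reduceIte, Matrix.cons_val, Pi.zero_apply, mul_zero, zero_mul, mul_one,
      one_mul, add_zero, zero_add, sub_zero, neg_zero, zero_div] <;>
    ring

/-- the canonical Lie-Poisson bivector P on e*(3) and its trivial
deformation P_g are compatible: the mixed Jacobi identity holds on coordinate
functions, i.e. [P, P_g] = 0 (so P + P_g is again Poisson). -/
theorem compatibility_P_Pg
    (a : R3) (d : ℝ) (hd : 0 < d)
    (x : St) (hx : 0 < 1 - d * dot3 x.1 (Aapp a x.1)) :
    ∀ u v w : Fin 3 ⊕ Fin 3,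
      (pb piP (coordFn u) (pb (piG a d) (coordFn v) (coordFn w)) x +
       pb piP (coordFn v) (pb (piG a d) (coordFn w) (coordFn u)) x +
       pb piP (coordFn w) (pb (piG a d) (coordFn u) (coordFn v)) x) +
      (pb (piG a d) (coordFn u) (pb piP (coordFn v) (coordFn w)) x +
       pb (piG a d) (coordFn v) (pb piP (coordFn w) (coordFn u)) x +
       pb (piG a d) (coordFn w) (pb piP (coordFn u) (coordFn v)) x) = 0 :=
  compatibility_P_Pg_general a d x hx
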